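/- In type B_n with positive roots Φ⁺ = { x_i ± x_j | 1 ≤ i < j ≤ n } ∪ { x_i | 1 ≤ i ≤ n }, the derivation ψ^B_{i,2n+1−i} = ∑_{k=1}^{i} (∏_{ℓ=i+1}^{n} (x_k − x_ℓ)(x_k + x_ℓ)) x_k ∂_k satisfies ψ^B_{i,2n+1−i}(α) ∈ (α) for every α ∈ Φ⁺ and every 1 ≤ i ≤ n. -/

import Mathlib

open MvPolynomial

noncomputable section

/-! The derivation sends `x_p` to `c_p x_p` if `p ≤ i` and to `0` otherwise, where
`c_k = ∏_{l > i} (x_k² − x_l²)`. Let `α = x_p ± x_q` with `p < q`. If `q ≤ i`, then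
`ψ(α) = c_p α ∓ (c_p − c_q) x_q`, and `x_p² − x_q²` divides `c_p − c_q` because `c_k` is a
polynomial in `x_k²`. If `p ≤ i < q`, the factor `x_p² − x_q²` occurs in `c_p` itself. In both
cases `α ∣ x_p² − x_q²` finishes the argument. -/

/-- The derivation `ψ^B_{i,2n+1−i} = ∑_{k=1}^{i} (∏_{ℓ=i+1}^{n} (x_k−x_ℓ)(x_k+x_ℓ)) x_k ∂_k`
of type `B_n`, applied to a polynomial `p`. -/
def psiBtop (n i : ℕ) (p : MvPolynomial ℕ ℝ) : MvPolynomial ℕ ℝ :=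
  ∑ k ∈ Finset.Icc 1 i,
    (∏ l ∈ Finset.Icc (i + 1) n, ((X k - X l) * (X k + X l))) * X k * pderiv k p

theorem sub_dvd_prod_sub_sub_prod_sub {R ι : Type*} [CommRing R] (s : Finset ι) (f : ι → R)
    (a b : R) : a - b ∣ ∏ l ∈ s, (a - f l) - ∏ l ∈ s, (b - f l) := by
  have h := Polynomial.sub_dvd_eval_sub a b (∏ l ∈ s, (Polynomial.X - Polynomial.C (f l)))
  simpa only [Polynomial.eval_prod, Polynomial.eval_sub, Polynomial.eval_X, Polynomial.eval_C]
    using h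

def psiBtopCoeff (n i k : ℕ) : MvPolynomial ℕ ℝ :=
  ∏ l ∈ Finset.Icc (i + 1) n, ((X k - X l) * (X k + X l))

theorem psiBtop_X (n i p : ℕ) :
    psiBtop n i (X p) = if p ∈ Finset.Icc 1 i then psiBtopCoeff n i p * X p else 0 := by
  rw [psiBtop, ← Finset.sum_ite_eq' (Finset.Icc 1 i) p (fun k => psiBtopCoeff n i k * X k)]
  refine Finset.sum_congr rfl fun k _ => ?_
  by_cases h : k = p
  · simp [h, psiBtopCoeff]
  · simp [pderiv_X_of_ne (Ne.symm h), h]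

theorem psiBtop_X_add_C_mul_X (n i p q : ℕ) (ε : ℝ) :
    psiBtop n i (X p + C ε * X q) = psiBtop n i (X p) + C ε * psiBtop n i (X q) := by
  rw [psiBtop, psiBtop, psiBtop, Finset.mul_sum, ← Finset.sum_add_distrib]
  refine Finset.sum_congr rfl fun k _ => ?_
  rw [map_add, pderiv_C_mul]
  ring

theorem X_sub_X_mul_X_add_X_dvd_psiBtopCoeff_sub (n i p q : ℕ) :
    (X p - X q) * (X p + X q) ∣ psiBtopCoeff n i p - psiBtopCoeff n i q := by
  have factor (k l : ℕ) :
      (X k - X l) * (X k + X l) = (X k ^ 2 - X l ^ 2 : MvPolynomial ℕ ℝ) := by ring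
  simp only [psiBtopCoeff, factor]
  exact sub_dvd_prod_sub_sub_prod_sub _ _ _ _

theorem X_sub_X_mul_X_add_X_dvd_psiBtopCoeff (n i p q : ℕ) (hq : q ∈ Finset.Icc (i + 1) n) :
    (X p - X q) * (X p + X q) ∣ psiBtopCoeff n i p :=
  Finset.dvd_prod_of_mem (fun l => (X p - X l) * (X p + X l)) hq

theorem X_add_C_mul_X_dvd_psiBtop (n i p q : ℕ) (hp : 1 ≤ p) (hpq : p < q) (hqn : q ≤ n)
    (ε : ℝ) (hε : ε ^ 2 = 1) : X p + C ε * X q ∣ psiBtop n i (X p + C ε * X q) := by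
  have hCε : (C ε : MvPolynomial ℕ ℝ) ^ 2 = 1 := by rw [← C_pow, hε, C_1]
  have hα : X p + C ε * X q ∣ (X p - X q) * (X p + X q) :=
    ⟨X p - C ε * X q, by linear_combination X q ^ 2 * hCε⟩
  rw [psiBtop_X_add_C_mul_X, psiBtop_X, psiBtop_X]
  by_cases hqi : q ≤ i
  · rw [if_pos (Finset.mem_Icc.2 ⟨hp, by omega⟩), if_pos (Finset.mem_Icc.2 ⟨by omega, hqi⟩)]
    have hψ : psiBtopCoeff n i p * X p + C ε * (psiBtopCoeff n i q * X q) =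
        psiBtopCoeff n i p * (X p + C ε * X q) -
          C ε * X q * (psiBtopCoeff n i p - psiBtopCoeff n i q) := by ring
    rw [hψ]
    exact dvd_sub (dvd_mul_left _ _)
      (dvd_mul_of_dvd_right (hα.trans (X_sub_X_mul_X_add_X_dvd_psiBtopCoeff_sub n i p q)) _)
  · rw [if_neg fun h => hqi (Finset.mem_Icc.1 h).2, mul_zero, add_zero]
    split_ifs
    · exact (hα.trans (X_sub_X_mul_X_add_X_dvd_psiBtopCoeff n i p q
        (Finset.mem_Icc.2 ⟨by omega, hqn⟩))).mul_right _
    · exact dvd_zero _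

theorem statement7_general (n i : ℕ)
    (α : MvPolynomial ℕ ℝ)
    (hα : (∃ p q, 1 ≤ p ∧ p < q ∧ q ≤ n ∧ (α = X p - X q ∨ α = X p + X q)) ∨
          (∃ p, 1 ≤ p ∧ p ≤ n ∧ α = X p)) :
    psiBtop n i α ∈ Ideal.span {α} := by
  rw [Ideal.mem_span_singleton]
  rcases hα with ⟨p, q, hp, hpq, hqn, rfl | rfl⟩ | ⟨p, -, -, rfl⟩
  · simpa [sub_eq_add_neg] using X_add_C_mul_X_dvd_psiBtop n i p q hp hpq hqn (-1) (by norm_num)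
  · simpa using X_add_C_mul_X_dvd_psiBtop n i p q hp hpq hqn 1 (by norm_num)
  · rw [psiBtop_X]
    split_ifs
    exacts [dvd_mul_left _ _, dvd_zero _]

/-- for every positive root `α` of type `B_n`
(`α = x_p ± x_q` with `p < q`, or `α = x_p`), and every `1 ≤ i ≤ n`,
`ψ^B_{i,2n+1−i}(α)` lies in the principal ideal `(α)`. -/
theorem statement7 (n i : ℕ) (hi : 1 ≤ i) (hin : i ≤ n)
    (α : MvPolynomial ℕ ℝ)
    (hα : (∃ p q, 1 ≤ p ∧ p < q ∧ q ≤ n ∧ (α = X p - X q ∨ α = X p + X q)) ∨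
          (∃ p, 1 ≤ p ∧ p ≤ n ∧ α = X p)) :
    psiBtop n i α ∈ Ideal.span {α} :=
  statement7_general n i α hα
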